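/- arXiv:1412.0746 — 4 statements merged into one kernel-verified Lean document; each statement's English description precedes it below -/
import Mathlib

section
/- The curve γ(τ) = (2/((2-ατ)² + β²τ²))·((2-ατ)τ, βτ²) in ℝ², for fixed real α, β, satisfies the Euclidean conformal geodesic equation dA/dτ = 3((V·A)/(V·V))A − (3(A·A)/(2(V·V)))V, where V = dγ/dτ and A = d²γ/dτ², at every τ where V·V ≠ 0. -/
/-!
In complex notation the curve is `γ(τ) = 2τ / (2 - cτ)` with `c = α + iβ`: a Möbius transformation
of the real parameter. For complex `V ≠ 0` we have `V·A = Re(V̄A)`, and multiplying the conformal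
geodesic equation by `V̄V` turns it into `V̄ (A'V - (3/2)A²) = 0`. So a planar curve solves it exactly
when its Schwarzian derivative `A'/V - (3/2)(A/V)²` vanishes, which holds for every Möbius map
`t ↦ (at + b)/(ct + d)`: its derivatives are `Δ/u²`, `-2cΔ/u³`, `6c²Δ/u⁴` with `u = ct + d` and
`Δ = ad - bc`. At a pole `u = 0` the map is discontinuous, so `V = 0` there.
-/

open RealInnerProductSpace Filter Topology

section Mobius

variable {𝕜 𝕜' : Type*} [NontriviallyNormedField 𝕜] [NontriviallyNormedField 𝕜']
  [NormedAlgebra 𝕜 𝕜']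

def mobius (a b c d : 𝕜') (t : 𝕜) : 𝕜' := (t • a + b) / (t • c + d)

variable (a b c d : 𝕜') {t : 𝕜}

theorem hasDerivAt_affine : HasDerivAt (fun s : 𝕜 => s • c + d) c t := by
  simpa using ((hasDerivAt_id t).smul_const c).add_const d

theorem hasDerivAt_const_div_affine_pow (K : 𝕜') (n : ℕ) (ht : t • c + d ≠ 0) :
    HasDerivAt (fun s : 𝕜 => K / (s • c + d) ^ n) (-(n * c * K) / (t • c + d) ^ (n + 1)) t := by
  refine ((hasDerivAt_const t K).div ((hasDerivAt_affine c d).pow n)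
    (pow_ne_zero n ht)).congr_deriv ?_
  rcases n with _ | n
  · simp
  · simp only [Pi.pow_apply, Nat.add_sub_cancel]
    generalize t • c + d = u at ht ⊢
    field_simp
    ring

theorem hasDerivAt_mobius (ht : t • c + d ≠ 0) :
    HasDerivAt (mobius a b c d) ((a * d - b * c) / (t • c + d) ^ 2) t := by
  refine ((hasDerivAt_affine a b).div (hasDerivAt_affine c d) ht).congr_deriv ?_
  simp only [Algebra.smul_def]
  ring

theorem eventually_affine_ne_zero (ht : t • c + d ≠ 0) : ∀ᶠ s in 𝓝 t, s • c + d ≠ 0 :=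
  (hasDerivAt_affine c d).continuousAt.eventually_ne ht

theorem deriv_mobius (ht : t • c + d ≠ 0) :
    deriv (mobius a b c d) t = (a * d - b * c) / (t • c + d) ^ 2 :=
  (hasDerivAt_mobius a b c d ht).deriv

theorem deriv_deriv_mobius (ht : t • c + d ≠ 0) :
    deriv (deriv (mobius a b c d)) t = -(2 * c * (a * d - b * c)) / (t • c + d) ^ 3 := by
  rw [Filter.EventuallyEq.deriv_eq ((eventually_affine_ne_zero c d ht).mono fun s =>
    deriv_mobius a b c d)]
  exact_mod_cast (hasDerivAt_const_div_affine_pow c d _ 2 ht).deriv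

theorem deriv_deriv_deriv_mobius (ht : t • c + d ≠ 0) :
    deriv (deriv (deriv (mobius a b c d))) t = 6 * c ^ 2 * (a * d - b * c) / (t • c + d) ^ 4 := by
  rw [Filter.EventuallyEq.deriv_eq ((eventually_affine_ne_zero c d ht).mono fun s =>
    deriv_deriv_mobius a b c d),
    (hasDerivAt_const_div_affine_pow c d _ 3 ht).deriv]
  push_cast
  ring

theorem deriv_deriv_deriv_mobius_mul (ht : t • c + d ≠ 0) :
    deriv (deriv (deriv (mobius a b c d))) t * deriv (mobius a b c d) t =
      3 / 2 * deriv (deriv (mobius a b c d)) t ^ 2 := by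
  rw [deriv_deriv_deriv_mobius a b c d ht, deriv_deriv_mobius a b c d ht, deriv_mobius a b c d ht]
  field_simp
  ring

theorem not_continuousAt_mobius (hΔ : a * d - b * c ≠ 0) (ht : t • c + d = 0) :
    ¬ContinuousAt (mobius a b c d) t := by
  intro hcont
  -- `u · f` would be continuous at the pole with value `0` but limit `t • a + b`.
  have hc : c ≠ 0 := by rintro rfl; simp_all
  have hne : ∀ᶠ s in 𝓝[≠] t, s • c + d ≠ 0 := by
    filter_upwards [self_mem_nhdsWithin] with s hs hs'
    exact hs (smul_left_injective 𝕜 hc (add_right_cancel (hs'.trans ht.symm)))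
  have hnum : (t • c + d) * mobius a b c d t = t • a + b := by
    have hprod := ((hasDerivAt_affine c d).continuousAt.mul hcont).tendsto
    refine tendsto_nhds_unique (hprod.mono_left (nhdsWithin_le_nhds (s := {t}ᶜ))) ?_
    refine ((hasDerivAt_affine a b).continuousAt.tendsto.mono_left nhdsWithin_le_nhds).congr' ?_
    filter_upwards [hne] with s hs
    exact (mul_div_cancel₀ _ hs).symm
  rw [ht, zero_mul] at hnum
  apply hΔ
  rw [eq_neg_of_add_eq_zero_right ht, eq_neg_of_add_eq_zero_right hnum.symm]
  simp only [Algebra.smul_def]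
  ring

end Mobius

section ConformalGeodesic

variable {E F : Type*} [NormedAddCommGroup E] [InnerProductSpace ℝ E]
  [NormedAddCommGroup F] [InnerProductSpace ℝ F]

/-- The conformal geodesic equation of flat space, where the Schouten tensor vanishes. -/
def IsConformalGeodesicAt (γ : ℝ → E) (τ : ℝ) : Prop :=
  deriv (deriv (deriv γ)) τ =
    (3 * (⟪deriv γ τ, deriv (deriv γ) τ⟫ / ⟪deriv γ τ, deriv γ τ⟫)) • deriv (deriv γ) τ -
      (3 * ⟪deriv (deriv γ) τ, deriv (deriv γ) τ⟫ / (2 * ⟪deriv γ τ, deriv γ τ⟫)) • deriv γ τ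

theorem LinearIsometryEquiv.comp_deriv (e : E ≃ₗᵢ[ℝ] F) (f : ℝ → E) :
    deriv (e ∘ f) = e ∘ deriv f := by
  ext1 x
  simp only [deriv, e.comp_fderiv]
  rfl

theorem LinearIsometryEquiv.isConformalGeodesicAt_comp_iff (e : E ≃ₗᵢ[ℝ] F) (f : ℝ → E) (τ : ℝ) :
    IsConformalGeodesicAt (e ∘ f) τ ↔ IsConformalGeodesicAt f τ := by
  simp only [IsConformalGeodesicAt, e.comp_deriv, Function.comp_apply, e.inner_map_map]
  rw [← map_smul, ← map_smul, ← map_sub, e.injective.eq_iff]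

end ConformalGeodesic

theorem Complex.isConformalGeodesicAt_of_mul_eq {f : ℝ → ℂ} {τ : ℝ} (hV : deriv f τ ≠ 0)
    (h : deriv (deriv (deriv f)) τ * deriv f τ = 3 / 2 * deriv (deriv f) τ ^ 2) :
    IsConformalGeodesicAt f τ := by
  unfold IsConformalGeodesicAt
  generalize deriv (deriv (deriv f)) τ = J at h ⊢
  generalize deriv (deriv f) τ = A at h ⊢
  generalize deriv f τ = V at hV h ⊢
  have hV' : V.re ^ 2 + V.im ^ 2 ≠ 0 := by
    rwa [sq, sq, ← Complex.normSq_apply, Ne, Complex.normSq_eq_zero]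
  have hre := congr_arg Complex.re h
  have him := congr_arg Complex.im h
  norm_num [Complex.mul_re, Complex.mul_im, sq] at hre him
  simp only [Complex.inner, Complex.ext_iff, Complex.sub_re, Complex.sub_im, Complex.real_smul,
    Complex.mul_re, Complex.mul_im, Complex.ofReal_re, Complex.ofReal_im, Complex.conj_re,
    Complex.conj_im, sub_neg_eq_add, mul_neg]
  constructor <;> field_simp
  · linear_combination 2 * V.re * hre + 2 * V.im * him
  · linear_combination 2 * V.re * him - 2 * V.im * hre

theorem isConformalGeodesicAt_mobius (a b c d : ℂ) (hΔ : a * d - b * c ≠ 0) (τ : ℝ)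
    (hV : deriv (mobius a b c d) τ ≠ 0) : IsConformalGeodesicAt (mobius a b c d) τ := by
  have hτ : τ • c + d ≠ 0 := fun hτ => hV <| deriv_zero_of_not_differentiableAt fun hd =>
    not_continuousAt_mobius a b c d hΔ hτ hd.continuousAt
  exact Complex.isConformalGeodesicAt_of_mul_eq hV (deriv_deriv_deriv_mobius_mul a b c d hτ)

theorem Complex.orthonormalBasisOneI_repr_mobius (α β τ : ℝ) :
    (Complex.orthonormalBasisOneI.repr (mobius 2 0 (-⟨α, β⟩) 2 τ)).ofLp =
      (2 / ((2 - α * τ) ^ 2 + β ^ 2 * τ ^ 2)) • ![(2 - α * τ) * τ, β * τ ^ 2] := by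
  rw [Complex.orthonormalBasisOneI_repr_apply]
  ext i
  fin_cases i <;> simp [mobius, Complex.div_re, Complex.div_im, Complex.normSq_apply] <;> ring

/-- The explicit curve `γ(τ) = (2/((2-ατ)² + β²τ²))·((2-ατ)τ, βτ²)` in `ℝ²`
satisfies the flat (Euclidean) conformal geodesic equation
`A' = 3((V·A)/(V·V))A − (3(A·A)/(2(V·V)))V` at every `τ` where `V·V ≠ 0`. -/
theorem stmt0 (α β : ℝ)
    (γ : ℝ → EuclideanSpace ℝ (Fin 2))
    (hγ : ∀ τ : ℝ, γ τ =
      (2 / ((2 - α * τ) ^ 2 + β ^ 2 * τ ^ 2)) • ![(2 - α * τ) * τ, β * τ ^ 2]) :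
    ∀ τ : ℝ, ⟪deriv γ τ, deriv γ τ⟫ ≠ 0 →
      deriv (deriv (deriv γ)) τ =
        (3 * (⟪deriv γ τ, deriv (deriv γ) τ⟫ / ⟪deriv γ τ, deriv γ τ⟫)) •
            deriv (deriv γ) τ -
          (3 * ⟪deriv (deriv γ) τ, deriv (deriv γ) τ⟫ /
              (2 * ⟪deriv γ τ, deriv γ τ⟫)) • deriv γ τ := by
  intro τ hVV
  obtain rfl : γ = Complex.orthonormalBasisOneI.repr ∘ mobius 2 0 (-⟨α, β⟩) 2 :=
    funext fun t => WithLp.ofLp_injective _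
      ((hγ t).trans (Complex.orthonormalBasisOneI_repr_mobius α β t).symm)
  refine (LinearIsometryEquiv.isConformalGeodesicAt_comp_iff _ _ _).2
    (isConformalGeodesicAt_mobius _ _ _ _ (by norm_num) τ ?_)
  rw [LinearIsometryEquiv.comp_deriv] at hVV
  simpa using hVV
end

section
/- The curve τ ↦ (τ/(1−τ), 0, …, 0) in ℝⁿ, defined for τ ∈ [0,1), satisfies the flat conformal geodesic equation, has initial conditions γ(0) = 0, γ'(0) = (1,0,…,0), γ''(0) = (2,0,…,0), and ‖γ(τ)‖ → ∞ as τ → 1⁻. -/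
/-!
Along a straight line `γ t = f t • e` the vectors `V`, `A`, `A'` are the multiples `f' e`,
`f'' e`, `f''' e`, and the flat conformal geodesic equation collapses to
`f''' f' = (3/2) f''²`, i.e. to the vanishing of the Schwarzian derivative of `f`.
The function `τ / (1 - τ) = (1 - τ)⁻¹ - 1` is a Möbius transformation, so its Schwarzian
vanishes; explicitly its `k`-th derivative is `k! (1 - τ)^(-1-k)` for `k ≥ 1`.
-/

open RealInnerProductSpace Filter Topology Nat

section IteratedDeriv

variable {𝕜 F : Type*} [NontriviallyNormedField 𝕜] [NormedAddCommGroup F] [NormedSpace 𝕜 F]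

theorem iteratedDeriv_two (f : 𝕜 → F) : iteratedDeriv 2 f = deriv (deriv f) := by
  rw [iteratedDeriv_eq_iterate]
  rfl

theorem iteratedDeriv_three (f : 𝕜 → F) : iteratedDeriv 3 f = deriv (deriv (deriv f)) := by
  rw [iteratedDeriv_eq_iterate]
  rfl

end IteratedDeriv

section Schwarzian

variable {𝕜 : Type*} [NontriviallyNormedField 𝕜]

noncomputable def schwarzian (f : 𝕜 → 𝕜) (t : 𝕜) : 𝕜 :=
  iteratedDeriv 3 f t / deriv f t - 3 / 2 * (iteratedDeriv 2 f t / deriv f t) ^ 2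

theorem iteratedDeriv_div_one_sub {k : ℕ} (hk : 0 < k) {t : 𝕜} (ht : t ≠ 1) :
    iteratedDeriv k (fun s => s / (1 - s)) t = k ! * (1 - t) ^ (-1 - k : ℤ) := by
  have h_eq : (fun s : 𝕜 => s / (1 - s)) =ᶠ[𝓝 t] fun s => -1 + (-1 * s + 1)⁻¹ := by
    filter_upwards [isOpen_ne.mem_nhds ht] with s hs
    have : 1 - s ≠ 0 := sub_ne_zero.2 hs.symm
    rw [neg_one_mul, neg_add_eq_sub s 1]
    field_simp
    ring
  rw [(h_eq.iteratedDeriv k).eq_of_nhds, iteratedDeriv_const_add hk, iteratedDeriv_eq_iterate,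
    iter_deriv_inv_linear, mul_right_comm, ← mul_pow]
  simp [neg_add_eq_sub]

theorem schwarzian_div_one_sub [CharZero 𝕜] {t : 𝕜} (ht : t ≠ 1) :
    schwarzian (fun s => s / (1 - s)) t = 0 := by
  have h : (1 : 𝕜) - t ≠ 0 := sub_ne_zero.2 ht.symm
  simp only [schwarzian, ← iteratedDeriv_one, iteratedDeriv_div_one_sub (by norm_num : 0 < 3) ht,
    iteratedDeriv_div_one_sub (by norm_num : 0 < 2) ht, iteratedDeriv_div_one_sub one_pos ht]
  norm_num [Nat.factorial]
  field_simp
  ring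

end Schwarzian

section LineCurve

variable {E : Type*} [NormedAddCommGroup E] [InnerProductSpace ℝ E]

/-- Where `V = 0` the quotients are junk `0`s and the equation degenerates to `A' = 0`. -/
def IsFlatConformalGeodesicAt (γ : ℝ → E) (τ : ℝ) : Prop :=
  deriv (deriv (deriv γ)) τ =
    (3 * (⟪deriv γ τ, deriv (deriv γ) τ⟫ / ⟪deriv γ τ, deriv γ τ⟫)) • deriv (deriv γ) τ -
      (3 * ⟪deriv (deriv γ) τ, deriv (deriv γ) τ⟫ / (2 * ⟪deriv γ τ, deriv γ τ⟫)) • deriv γ τ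

theorem isFlatConformalGeodesicAt_smul_const {f : ℝ → ℝ} {e : E} {τ : ℝ}
    (hf : ContDiffAt ℝ 3 f τ) (hf' : deriv f τ ≠ 0) (hS : schwarzian f τ = 0) (he : e ≠ 0) :
    IsFlatConformalGeodesicAt (fun t => f t • e) τ := by
  have hk (k : ℕ) (hk : k ≤ 3) :
      iteratedDeriv k (fun t => f t • e) τ = iteratedDeriv k f τ • e :=
    iteratedDeriv_smul_const (hf.of_le (mod_cast hk)) e
  have hee : ⟪e, e⟫ ≠ 0 := inner_self_ne_zero.2 he
  rw [IsFlatConformalGeodesicAt, ← iteratedDeriv_three, ← iteratedDeriv_two,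
    ← iteratedDeriv_one, hk 1 (by norm_num), hk 2 (by norm_num), hk 3 le_rfl, iteratedDeriv_one]
  simp only [real_inner_smul_left, real_inner_smul_right, smul_smul, ← sub_smul]
  congr 1
  rw [schwarzian, sub_eq_zero] at hS
  field_simp at hS ⊢
  linear_combination hS

end LineCurve

theorem tendsto_div_one_sub_nhdsLT_one :
    Tendsto (fun t : ℝ => t / (1 - t)) (𝓝[<] 1) atTop := by
  have h_sub : Tendsto (fun t : ℝ => 1 - t) (𝓝[<] 1) (𝓝[>] 0) := by
    refine tendsto_nhdsWithin_of_tendsto_nhds_of_eventually_within _ ?_ ?_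
    · have h : Tendsto (fun t : ℝ => 1 - t) (𝓝 1) (𝓝 (1 - 1)) := tendsto_const_nhds.sub tendsto_id
      simpa using h.mono_left nhdsWithin_le_nhds
    · filter_upwards [self_mem_nhdsWithin] with t ht
      exact sub_pos.2 (Set.mem_Iio.1 ht)
  exact (tendsto_id.mono_left nhdsWithin_le_nhds).pos_mul_atTop one_pos
    h_sub.inv_tendsto_nhdsGT_zero

/-- The curve `τ ↦ (τ/(1−τ), 0, …, 0)` in `ℝⁿ` satisfies the flat conformal geodesic
equation on `[0,1)`, has initial conditions `γ(0) = 0`, `γ'(0) = e₁`, `γ''(0) = 2e₁`,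
and `‖γ(τ)‖ → ∞` as `τ → 1⁻`. -/
theorem stmt11 (n : ℕ) (hn : 1 ≤ n)
    (γ : ℝ → EuclideanSpace ℝ (Fin n))
    (hγ : ∀ τ : ℝ, γ τ =
      (τ / (1 - τ)) • EuclideanSpace.single (⟨0, by omega⟩ : Fin n) (1 : ℝ)) :
    (∀ τ ∈ Set.Ico (0 : ℝ) 1,
      deriv (deriv (deriv γ)) τ =
        (3 * (⟪deriv γ τ, deriv (deriv γ) τ⟫ / ⟪deriv γ τ, deriv γ τ⟫)) •
            deriv (deriv γ) τ -
          (3 * ⟪deriv (deriv γ) τ, deriv (deriv γ) τ⟫ /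
              (2 * ⟪deriv γ τ, deriv γ τ⟫)) • deriv γ τ) ∧
      γ 0 = 0 ∧
      deriv γ 0 = EuclideanSpace.single (⟨0, by omega⟩ : Fin n) (1 : ℝ) ∧
      deriv (deriv γ) 0 = EuclideanSpace.single (⟨0, by omega⟩ : Fin n) (2 : ℝ) ∧
      Tendsto (fun τ => ‖γ τ‖) (nhdsWithin 1 (Set.Iio 1)) atTop := by
  set e := EuclideanSpace.single (⟨0, by omega⟩ : Fin n) (1 : ℝ) with he
  have hγ' : γ = fun τ => (τ / (1 - τ)) • e := funext hγ
  have hf (τ : ℝ) (hτ : τ ≠ 1) : ContDiffAt ℝ 3 (fun s : ℝ => s / (1 - s)) τ :=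
    contDiffAt_id.div (contDiffAt_const.sub contDiffAt_id) (sub_ne_zero.2 hτ.symm)
  have hderiv (k : ℕ) (hk : 0 < k) (hk3 : k ≤ 3) (τ : ℝ) (hτ : τ ≠ 1) :
      iteratedDeriv k γ τ = (k ! * (1 - τ) ^ (-1 - k : ℤ)) • e := by
    rw [hγ', iteratedDeriv_smul_const ((hf τ hτ).of_le (mod_cast hk3)),
      iteratedDeriv_div_one_sub hk hτ]
  refine ⟨fun τ hτ => ?_, by simp [hγ], ?_, ?_, ?_⟩
  · have hτ1 : τ ≠ 1 := hτ.2.ne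
    rw [hγ']
    refine isFlatConformalGeodesicAt_smul_const (hf τ hτ1) ?_ (schwarzian_div_one_sub hτ1)
      (by simp [he])
    rw [← iteratedDeriv_one, iteratedDeriv_div_one_sub one_pos hτ1]
    simp [sub_ne_zero.2 hτ1.symm]
  · simpa using hderiv 1 one_pos (by norm_num) 0 zero_ne_one
  · rw [← iteratedDeriv_two, hderiv 2 two_pos (by norm_num) 0 zero_ne_one]
    ext j
    simp [he, PiLp.single_apply]
  · refine (tendsto_norm_atTop_atTop.comp tendsto_div_one_sub_nhdsLT_one).congr fun τ => ?_
    simp [hγ, norm_smul, he]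
end

section
/- Let g be the Euclidean metric on ℝⁿ and ĝ = Ω²g with Ω smooth and positive, and let Υ = d(log Ω), so that the Christoffel symbols of ĝ are Γ^a_{bc} = δ^a_b Υ_c + δ^a_c Υ_b − g_{bc} Υ^a. Then along any smooth curve with nonvanishing velocity V and acceleration A, the quantity B^a = A^a/(V·V) − 2((V·A)/(V·V)²)V^a, computed with the Levi-Civita connections of ĝ and g respectively, transforms by B̂_a = B_a − Υ_a. -/
open RealInnerProductSpace

lemma aux15 {E : Type*} [AddCommGroup E] [Module ℝ E] (x y z : E) (v a u w : ℝ)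
    (hv : v ≠ 0) (hw : w ≠ 0) :
    w • ((w * v)⁻¹ • (y + (2 * u) • x - v • z) - (2 * (w * (a + v * u)) / (w * v) ^ 2) • x)
      = (v⁻¹ • y - (2 * a / v ^ 2) • x) - z := by
  match_scalars <;> field_simp <;> ring

/-- Conformal transformation of the acceleration `B` in the flat model. On `ℝⁿ` with
the Euclidean metric `g`, let `ĝ = Ω²g` with `Ω` smooth and positive and
`Υ = ∇(log Ω)`. Along a smooth curve `γ` with nowhere-null velocity `V = γ'` and
`g`-acceleration `A = V'`, the `ĝ`-acceleration is
`Â = A + 2(V·Υ)V − (V·V)Υ` (from the Christoffel symbols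
`Γ^a_{bc} = δ^a_b Υ_c + δ^a_c Υ_b − g_{bc}Υ^a` of `ĝ`).  With
`B = A/(V·V) − 2((V·A)/(V·V)²)V` computed with `g`, and `B̂` computed analogously
with `ĝ` (so `ĝ(V,V) = Ω²(V·V)`, `ĝ(V,Â) = Ω²(V·Â)`), the lowered covector
`ĝ_{ab}B̂^b = Ω²B̂` (identified with a vector via `g`) equals `B − Υ`. -/
theorem stmt15 (n : ℕ)
    (Ω : EuclideanSpace ℝ (Fin n) → ℝ)
    (hΩpos : ∀ x, 0 < Ω x) (hΩ : ContDiff ℝ (⊤ : ℕ∞) Ω)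
    (γ : ℝ → EuclideanSpace ℝ (Fin n)) (hγ : ContDiff ℝ (⊤ : ℕ∞) γ)
    (V A Υ Ahat B Bhat_lowered : ℝ → EuclideanSpace ℝ (Fin n))
    (hVdef : ∀ τ, V τ = deriv γ τ)
    (hAdef : ∀ τ, A τ = deriv (deriv γ) τ)
    (hV : ∀ τ, ⟪V τ, V τ⟫ ≠ 0)
    (hΥdef : ∀ τ, Υ τ = gradient (fun x => Real.log (Ω x)) (γ τ))
    (hAhat : ∀ τ, Ahat τ = A τ + (2 * ⟪V τ, Υ τ⟫) • V τ - ⟪V τ, V τ⟫ • Υ τ)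
    (hB : ∀ τ, B τ = (⟪V τ, V τ⟫)⁻¹ • A τ - (2 * ⟪V τ, A τ⟫ / ⟪V τ, V τ⟫ ^ 2) • V τ)
    (hBhat : ∀ τ, Bhat_lowered τ =
      ((Ω (γ τ)) ^ 2) •
        (((Ω (γ τ)) ^ 2 * ⟪V τ, V τ⟫)⁻¹ • Ahat τ -
          (2 * ((Ω (γ τ)) ^ 2 * ⟪V τ, Ahat τ⟫) /
              ((Ω (γ τ)) ^ 2 * ⟪V τ, V τ⟫) ^ 2) • V τ)) :
    ∀ τ : ℝ, Bhat_lowered τ = B τ - Υ τ := by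
  intro τ
  have hΩ2 : (Ω (γ τ)) ^ 2 ≠ 0 := pow_ne_zero 2 (ne_of_gt (hΩpos _))
  have hvv := hV τ
  rw [hBhat, hAhat, hB]
  have hVA : ⟪V τ, A τ + (2 * ⟪V τ, Υ τ⟫) • V τ - ⟪V τ, V τ⟫ • Υ τ⟫
      = ⟪V τ, A τ⟫ + ⟪V τ, V τ⟫ * ⟪V τ, Υ τ⟫ := by
    simp only [inner_add_right, inner_sub_right, real_inner_smul_right]
    ring
  rw [hVA]
  exact aux15 (V τ) (A τ) (Υ τ) _ _ _ _ hvv hΩ2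
end

section
/- Every straight line through the origin in ℝⁿ with a projective parameterization, and every round circle through the origin, arises as a solution of the flat conformal geodesic equation with suitable initial conditions: specifically, for every (α, β) ∈ ℝ² the initial value problem γ(0)=0, γ'(0)=e₁, γ''(0)=αe₁+βe₂ for the flat conformal geodesic equation restricted to the plane span(e₁,e₂) has a solution whose trajectory is a round circle if β ≠ 0 and a line if β = 0. -/
/-!
Identify the plane spanned by `e₁, e₂` with `ℂ` through a linear isometry and take
`z(t) = 2t / (2 - ct)` with `c = α + βi`. Writing `w = 2 - ct` and `u = c / w`, one has
`z' = 4 / w²`, `z'' = 2u z'` and `z''' = 6u² z'`; and for `V ≠ 0` the right-hand side of the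
equation at `(V, 2uV)` is `(12 Re(u) u - 6|u|²) V = 6u² V`, since `2 Re(u) u - |u|² = u²`.
As a Möbius image of the real line, `z` runs on the circle of centre `i / β` through `0` when
`β ≠ 0`, and on `ℝ` when `β = 0`. At the pole `t = 2 / c` that occurs for `β = 0, α ≠ 0`, the
curve is discontinuous, so `deriv` returns its junk value `0` there and the equation is vacuous.
-/

open RealInnerProductSpace Complex Filter Topology Set
open scoped ComplexConjugate

noncomputable section

variable {E : Type*} [NormedAddCommGroup E] [InnerProductSpace ℝ E]
  {F : Type*} [NormedAddCommGroup F] [InnerProductSpace ℝ F]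

def conformalGeodesicField (V A : E) : E :=
  (3 * (⟪V, A⟫ / ⟪V, V⟫)) • A - (3 * ⟪A, A⟫ / (2 * ⟪V, V⟫)) • V

lemma LinearIsometry.conformalGeodesicField_map (L : F →ₗᵢ[ℝ] E) (V A : F) :
    conformalGeodesicField (L V) (L A) = L (conformalGeodesicField V A) := by
  simp only [conformalGeodesicField, L.inner_map_map, map_sub, map_smul]

lemma conformalGeodesicField_two_mul_mul (u V : ℂ) (hV : V ≠ 0) :
    conformalGeodesicField V (2 * u * V) = 6 * u ^ 2 * V := by
  have hN : normSq V ≠ 0 := normSq_pos.2 hV |>.ne'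
  have inner_mul_self (a b : ℂ) : ⟪a * V, b * V⟫ = (b * conj a).re * normSq V := by
    rw [Complex.inner, map_mul, mul_mul_mul_comm, mul_conj, re_mul_ofReal]
  have hVV : ⟪V, V⟫ = normSq V := by simpa using inner_mul_self 1 1
  have hVA : ⟪V, 2 * u * V⟫ = 2 * u.re * normSq V := by
    simpa [mul_comm] using inner_mul_self 1 (2 * u)
  have hAA : ⟪2 * u * V, 2 * u * V⟫ = 4 * normSq u * normSq V := by
    rw [inner_mul_self, map_mul, mul_mul_mul_comm, mul_conj, mul_conj]
    rw [← ofReal_mul, ofReal_re, normSq_ofNat]; ring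
  rw [conformalGeodesicField, hVV, hVA, hAA, real_smul, real_smul]
  field_simp
  apply Complex.ext <;> simp [mul_re, mul_im, normSq_apply, pow_two] <;> ring

lemma conformalGeodesicField_mobius (c w : ℂ) (hw : w ≠ 0) :
    conformalGeodesicField (4 / w ^ 2 : ℂ) (8 * c / w ^ 3) = 24 * c ^ 2 / w ^ 4 := by
  have h := conformalGeodesicField_two_mul_mul (c / w) (4 / w ^ 2) (by simpa using hw)
  convert h using 2 <;> field_simp <;> ring

lemma Set.EqOn.deriv_deriv_of_hasDerivAt {f g g' : ℝ → E} {s : Set ℝ} (hs : IsOpen s)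
    (hf : EqOn (_root_.deriv f) g s) (hg : ∀ t ∈ s, HasDerivAt g (g' t) t) :
    EqOn (_root_.deriv (_root_.deriv f)) g' s :=
  fun t ht => (hf.deriv hs ht).trans (hg t ht).deriv

lemma LinearIsometry.deriv_comp_of_not_continuousAt (L : F →ₗᵢ[ℝ] E) {f : ℝ → F} {x : ℝ}
    (hf : ¬ ContinuousAt f x) : deriv (L ∘ f) x = 0 :=
  deriv_zero_of_not_differentiableAt fun h =>
    hf (L.isometry.isEmbedding.isInducing.continuousAt_iff.2 h.continuousAt)

def planeMap (e₁ e₂ : E) : ℂ →L[ℝ] E :=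
  reCLM.smulRight e₁ + imCLM.smulRight e₂

lemma planeMap_apply (e₁ e₂ : E) (z : ℂ) : planeMap e₁ e₂ z = z.re • e₁ + z.im • e₂ := by
  simp [planeMap]

lemma planeMap_ofReal (e₁ e₂ : E) (x : ℝ) : planeMap e₁ e₂ x = x • e₁ := by
  simp [planeMap_apply]

lemma inner_planeMap_planeMap {e₁ e₂ : E} (h₁ : ‖e₁‖ = 1) (h₂ : ‖e₂‖ = 1) (h₁₂ : ⟪e₁, e₂⟫ = 0)
    (z w : ℂ) : ⟪planeMap e₁ e₂ z, planeMap e₁ e₂ w⟫ = ⟪z, w⟫ := by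
  simp only [planeMap_apply, inner_add_left, inner_add_right, real_inner_smul_left,
    real_inner_smul_right, real_inner_self_eq_norm_sq, h₁, h₂, h₁₂, real_inner_comm e₁ e₂,
    Complex.inner, mul_re, conj_re, conj_im]
  ring

def planeIsometry {e₁ e₂ : E} (h₁ : ‖e₁‖ = 1) (h₂ : ‖e₂‖ = 1) (h₁₂ : ⟪e₁, e₂⟫ = 0) :
    ℂ →ₗᵢ[ℝ] E :=
  (planeMap e₁ e₂).toLinearMap.isometryOfInner (inner_planeMap_planeMap h₁ h₂ h₁₂)

lemma coe_planeIsometry {e₁ e₂ : E} (h₁ : ‖e₁‖ = 1) (h₂ : ‖e₂‖ = 1) (h₁₂ : ⟪e₁, e₂⟫ = 0) :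
    ⇑(planeIsometry h₁ h₂ h₁₂) = planeMap e₁ e₂ :=
  rfl

def mobiusCurve (c : ℂ) (t : ℝ) : ℂ := 2 * t / (2 - c * t)

lemma mobiusCurve_ofReal (a t : ℝ) : mobiusCurve a t = ((2 * t / (2 - a * t) : ℝ) : ℂ) := by
  push_cast [mobiusCurve]; rfl

lemma hasDerivAt_two_sub_mul (c z : ℂ) : HasDerivAt (fun z : ℂ => 2 - c * z) (-c) z := by
  simpa using ((hasDerivAt_id z).const_mul c).const_sub 2

lemma hasDerivAt_mobiusCurve {c : ℂ} {τ : ℝ} (hτ : 2 - c * τ ≠ 0) :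
    HasDerivAt (mobiusCurve c) (4 / (2 - c * τ) ^ 2) τ := by
  have h := ((hasDerivAt_id (τ : ℂ)).const_mul 2).fun_div (hasDerivAt_two_sub_mul c τ) hτ
  refine h.comp_ofReal.congr_deriv ?_
  simp only [id]
  field_simp
  ring

lemma hasDerivAt_div_pow_two_sub_mul (k c : ℂ) (m : ℕ) {τ : ℝ} (hτ : 2 - c * τ ≠ 0) :
    HasDerivAt (fun t : ℝ => k / (2 - c * t) ^ m) (m * c * k / (2 - c * τ) ^ (m + 1)) τ := by
  have h := (hasDerivAt_const (τ : ℂ) k).fun_div ((hasDerivAt_two_sub_mul c τ).fun_pow m)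
    (pow_ne_zero m hτ)
  refine h.comp_ofReal.congr_deriv ?_
  rcases m with _ | m
  · simp
  · rw [Nat.add_sub_cancel]
    field_simp
    ring

lemma not_continuousAt_mobiusCurve {c : ℂ} {τ : ℝ} (hτ : 2 - c * τ = 0) :
    ¬ ContinuousAt (mobiusCurve c) τ := by
  intro hz
  have hcτ : c * τ = 2 := (sub_eq_zero.1 hτ).symm
  have hτ0 : (τ : ℂ) ≠ 0 := right_ne_zero_of_mul (hcτ ▸ two_ne_zero)
  have hw : Tendsto (fun t : ℝ => (2 - c * t) * mobiusCurve c t) (𝓝[≠] τ) (𝓝 0) := by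
    have : ContinuousAt (fun t : ℝ => 2 - c * t) τ := by fun_prop
    simpa [hτ] using (this.fun_mul hz).tendsto.mono_left nhdsWithin_le_nhds
  have hlin : Tendsto (fun t : ℝ => (2 * t : ℂ)) (𝓝[≠] τ) (𝓝 (2 * τ)) :=
    (Continuous.tendsto (by fun_prop) τ).mono_left nhdsWithin_le_nhds
  have heq : (fun t : ℝ => (2 - c * t) * mobiusCurve c t) =ᶠ[𝓝[≠] τ] fun t => 2 * t := by
    filter_upwards [self_mem_nhdsWithin] with t ht
    have : 2 - c * t ≠ 0 := by
      rw [← hcτ, ← mul_sub]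
      exact mul_ne_zero (left_ne_zero_of_mul (hcτ ▸ two_ne_zero))
        (sub_ne_zero.2 (by exact_mod_cast Ne.symm ht))
    exact mul_div_cancel₀ _ this
  exact mul_ne_zero two_ne_zero hτ0 (tendsto_nhds_unique (hw.congr' heq) hlin).symm

lemma two_sub_mul_ofReal_ne_zero_of_im_ne_zero {c : ℂ} (hc : c.im ≠ 0) (t : ℝ) : 2 - c * t ≠ 0 := by
  intro h
  have him : c.im * t = 0 := by simpa using congrArg im h
  rcases mul_eq_zero.1 him with h' | rfl
  · exact hc h'
  · norm_num at h

lemma dist_mobiusCurve_I_div_im {c : ℂ} (hc : c.im ≠ 0) (t : ℝ) :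
    dist (mobiusCurve c t) (I / c.im) = |c.im|⁻¹ := by
  have hw := two_sub_mul_ofReal_ne_zero_of_im_ne_zero hc t
  have hβ : (c.im : ℂ) ≠ 0 := ofReal_ne_zero.2 hc
  have key : mobiusCurve c t - I / c.im = -I * conj (2 - c * t) / (c.im * (2 - c * t)) := by
    rw [mobiusCurve, div_sub_div _ _ hw hβ, div_eq_div_iff (mul_ne_zero hw hβ) (mul_ne_zero hβ hw)]
    apply Complex.ext <;> simp [mul_re, mul_im] <;> ring
  rw [dist_eq_norm, key, norm_div, norm_mul, norm_mul, norm_conj, norm_neg, norm_I, one_mul,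
    norm_real, Real.norm_eq_abs]
  field_simp

section MobiusCurve

variable (L : ℂ →L[ℝ] E) (c : ℂ)

lemma isOpen_setOf_two_sub_mul_ofReal_ne_zero : IsOpen {t : ℝ | 2 - c * t ≠ 0} :=
  isOpen_ne_fun (by fun_prop) continuous_const

lemma eqOn_deriv_comp_mobiusCurve :
    EqOn (deriv (L ∘ mobiusCurve c)) (fun t => L (4 / (2 - c * t) ^ 2)) {t | 2 - c * t ≠ 0} :=
  fun _ ht => (L.hasFDerivAt.comp_hasDerivAt _ (hasDerivAt_mobiusCurve ht)).deriv

lemma eqOn_deriv_deriv_comp_mobiusCurve :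
    EqOn (deriv (deriv (L ∘ mobiusCurve c))) (fun t => L (8 * c / (2 - c * t) ^ 3))
      {t | 2 - c * t ≠ 0} := by
  refine (eqOn_deriv_comp_mobiusCurve L c).deriv_deriv_of_hasDerivAt
    (isOpen_setOf_two_sub_mul_ofReal_ne_zero c) fun t ht => ?_
  refine (L.hasFDerivAt.comp_hasDerivAt _
    (hasDerivAt_div_pow_two_sub_mul 4 c 2 ht)).congr_deriv ?_
  congr 1; push_cast; ring

lemma eqOn_deriv_deriv_deriv_comp_mobiusCurve :
    EqOn (deriv (deriv (deriv (L ∘ mobiusCurve c)))) (fun t => L (24 * c ^ 2 / (2 - c * t) ^ 4))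
      {t | 2 - c * t ≠ 0} := by
  refine (eqOn_deriv_deriv_comp_mobiusCurve L c).deriv_deriv_of_hasDerivAt
    (isOpen_setOf_two_sub_mul_ofReal_ne_zero c) fun t ht => ?_
  refine (L.hasFDerivAt.comp_hasDerivAt _
    (hasDerivAt_div_pow_two_sub_mul (8 * c) c 3 ht)).congr_deriv ?_
  congr 1; push_cast; ring

end MobiusCurve

lemma LinearIsometry.deriv_deriv_deriv_comp_mobiusCurve (L : ℂ →ₗᵢ[ℝ] E) (c : ℂ) {τ : ℝ}
    (hτ : ⟪deriv (L ∘ mobiusCurve c) τ, deriv (L ∘ mobiusCurve c) τ⟫ ≠ 0) :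
    deriv (deriv (deriv (L ∘ mobiusCurve c))) τ =
      conformalGeodesicField (deriv (L ∘ mobiusCurve c) τ)
        (deriv (deriv (L ∘ mobiusCurve c)) τ) := by
  by_cases hpole : 2 - c * τ = 0
  · rw [L.deriv_comp_of_not_continuousAt (not_continuousAt_mobiusCurve hpole), inner_zero_left]
      at hτ
    exact absurd rfl hτ
  have hV := eqOn_deriv_comp_mobiusCurve L.toContinuousLinearMap c hpole
  have hA := eqOn_deriv_deriv_comp_mobiusCurve L.toContinuousLinearMap c hpole
  have hJ := eqOn_deriv_deriv_deriv_comp_mobiusCurve L.toContinuousLinearMap c hpole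
  simp only [LinearIsometry.coe_toContinuousLinearMap] at hV hA hJ
  rw [hV, hA, hJ, L.conformalGeodesicField_map, conformalGeodesicField_mobius c _ hpole]

end

/-- For every `(α, β) ∈ ℝ²`, the initial value problem `γ(0) = 0`, `γ'(0) = e₁`,
`γ''(0) = αe₁ + βe₂` for the flat conformal geodesic equation (restricted to the
plane spanned by `e₁, e₂` in `ℝⁿ`) has a solution whose trajectory is a round circle
if `β ≠ 0` and lies on the line `ℝe₁` if `β = 0`. -/
theorem stmt16 (n : ℕ) (hn : 2 ≤ n) (α β : ℝ)
    (e₁ : EuclideanSpace ℝ (Fin n)) (e₂ : EuclideanSpace ℝ (Fin n))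
    (he₁ : e₁ = EuclideanSpace.single (⟨0, by omega⟩ : Fin n) (1 : ℝ))
    (he₂ : e₂ = EuclideanSpace.single (⟨1, by omega⟩ : Fin n) (1 : ℝ)) :
    ∃ γ : ℝ → EuclideanSpace ℝ (Fin n),
      γ 0 = 0 ∧ deriv γ 0 = e₁ ∧ deriv (deriv γ) 0 = α • e₁ + β • e₂ ∧
      (∀ τ : ℝ, ⟪deriv γ τ, deriv γ τ⟫ ≠ 0 →
        deriv (deriv (deriv γ)) τ =
          (3 * (⟪deriv γ τ, deriv (deriv γ) τ⟫ / ⟪deriv γ τ, deriv γ τ⟫)) •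
              deriv (deriv γ) τ -
            (3 * ⟪deriv (deriv γ) τ, deriv (deriv γ) τ⟫ /
                (2 * ⟪deriv γ τ, deriv γ τ⟫)) • deriv γ τ) ∧
      (β ≠ 0 → ∃ (c : EuclideanSpace ℝ (Fin n)) (r : ℝ), 0 < r ∧
        ∀ τ : ℝ, dist (γ τ) c = r) ∧
      (β = 0 → ∀ τ : ℝ, ∃ t : ℝ, γ τ = t • e₁) := by
  have h₁ : ‖e₁‖ = 1 := by simp [he₁]
  have h₂ : ‖e₂‖ = 1 := by simp [he₂]
  have h₁₂ : ⟪e₁, e₂⟫ = 0 := by simp [he₁, he₂, EuclideanSpace.inner_single_left]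
  set L := planeIsometry h₁ h₂ h₁₂
  have h0 : (0 : ℝ) ∈ {t : ℝ | 2 - (⟨α, β⟩ : ℂ) * t ≠ 0} := by norm_num
  refine ⟨L ∘ mobiusCurve ⟨α, β⟩, by simp [mobiusCurve], ?_, ?_,
    fun τ => L.deriv_deriv_deriv_comp_mobiusCurve _, fun hβ => ?_, fun hβ τ => ?_⟩
  · have h := eqOn_deriv_comp_mobiusCurve L.toContinuousLinearMap _ h0
    norm_num [L, coe_planeIsometry, planeMap_apply] at h ⊢
    exact h
  · have h := eqOn_deriv_deriv_comp_mobiusCurve L.toContinuousLinearMap _ h0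
    norm_num [L, coe_planeIsometry, planeMap_apply] at h ⊢
    exact h
  · exact ⟨L (I / β), |β|⁻¹, by positivity, fun τ => by
      simpa [L.dist_map] using dist_mobiusCurve_I_div_im (c := ⟨α, β⟩) hβ τ⟩
  · subst hβ
    exact ⟨2 * τ / (2 - α * τ), by
      rw [← planeMap_ofReal, ← mobiusCurve_ofReal]; rfl⟩
end
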